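/- Let M be an R-module such that there exists a non-unit x ∈ R with x ∉ W_R(M). Then M satisfies the dual of proper strong Property A if and only if M satisfies the dual of strong Property A. -/
import Mathlib


open Pointwise

/-- A proper submodule `L` is completely irreducible if whenever `L` is the intersection of a
family of submodules, `L` equals one of them. -/
def CompletelyIrreducible {R M : Type*} [CommRing R] [AddCommGroup M] [Module R M]
    (L : Submodule R M) : Prop :=
  L ≠ ⊤ ∧ ∀ s : Set (Submodule R M), L = sInf s → L ∈ s

/-- Every proper submodule is contained in a completely irreducible submodule. -/
lemma exists_completelyIrreducible_ge {R M : Type*} [CommRing R] [AddCommGroup M] [Module R M]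
    (N : Submodule R M) (hN : N ≠ ⊤) :
    ∃ L : Submodule R M, CompletelyIrreducible L ∧ N ≤ L := by
  obtain ⟨m, hm⟩ : ∃ m : M, m ∉ N := by
    by_contra h
    push_neg at h
    exact hN (Submodule.eq_top_iff'.mpr h)
  set S : Set (Submodule R M) := {L | m ∉ L} with hS
  obtain ⟨L, hNL, hLS, hmax⟩ := zorn_le_nonempty₀ S (fun c hcS hc K hK => by
    refine ⟨sSup c, ?_, fun z hz => le_sSup hz⟩
    intro hmem
    rw [Submodule.mem_sSup_of_directed ⟨K, hK⟩ hc.directedOn] at hmem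
    obtain ⟨z, hz, hmz⟩ := hmem
    exact hcS hz hmz) N hm
  refine ⟨L, ⟨?_, ?_⟩, hNL⟩
  · intro h
    exact hLS (h ▸ Submodule.mem_top)
  · intro s hs
    by_contra hLs
    apply hLS
    rw [hs, Submodule.mem_sInf]
    intro K hK
    have hLK : L ≤ K := hs ▸ sInf_le hK
    have : L ≠ K := fun h => hLs (h ▸ hK)
    by_contra hmK
    exact this (le_antisymm hLK (hmax hmK hLK))

lemma span_range_smul_top {R M : Type*} [CommRing R] [AddCommGroup M] [Module R M]
    {n : ℕ} (a : Fin n → R) :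
    Ideal.span (Set.range a) • (⊤ : Submodule R M) = ⨆ i, a i • (⊤ : Submodule R M) := by
  rw [Submodule.span_smul_eq, Submodule.set_smul_eq_iSup, iSup_range]

/-- If there exists a non-unit `x ∈ R` with `x ∉ W_R(M)`, then `M` satisfies the dual of proper
strong Property A iff `M` satisfies the dual of strong Property A. -/
theorem stmt17 {R M : Type*} [CommRing R] [AddCommGroup M] [Module R M]
    (x : R) (hx : ¬ IsUnit x) (hxW : x • (⊤ : Submodule R M) = ⊤) :
    (∀ (n : ℕ) (a : Fin n → R), (∀ i, a i • (⊤ : Submodule R M) ≠ ⊤) →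
        Ideal.span (Set.range a) ≠ ⊤ →
        Ideal.span (Set.range a) • (⊤ : Submodule R M) ≠ ⊤) ↔
      (∀ (n : ℕ) (a : Fin n → R), (∀ i, a i • (⊤ : Submodule R M) ≠ ⊤) →
        ∃ L : Submodule R M, CompletelyIrreducible L ∧
          ∀ i, a i • (⊤ : Submodule R M) ≤ L) := by
  constructor
  · intro hPA n a hW
    -- first show the span is proper
    have hb : ∀ i, (x * a i) • (⊤ : Submodule R M) = a i • (⊤ : Submodule R M) := by
      intro i
      rw [mul_comm, mul_smul, hxW]
    have hIne : Ideal.span (Set.range a) ≠ ⊤ := by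
      intro hI
      have hWb : ∀ i, (fun i => x * a i) i • (⊤ : Submodule R M) ≠ ⊤ := by
        intro i
        rw [hb i]; exact hW i
      have hJle : Ideal.span (Set.range fun i => x * a i) ≤ Ideal.span {x} := by
        rw [Ideal.span_le]
        rintro _ ⟨i, rfl⟩
        exact Ideal.mem_span_singleton.mpr ⟨a i, rfl⟩
      have hJne : Ideal.span (Set.range fun i => x * a i) ≠ ⊤ := by
        intro h
        exact hx (Ideal.span_singleton_eq_top.mp (top_le_iff.mp (h ▸ hJle)))
      have := hPA n (fun i => x * a i) hWb hJne
      apply this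
      rw [span_range_smul_top]
      simp_rw [hb]
      rw [← span_range_smul_top, hI, Submodule.top_smul]
    have hIMne := hPA n a hW hIne
    obtain ⟨L, hL, hle⟩ := exists_completelyIrreducible_ge _ hIMne
    refine ⟨L, hL, fun i => le_trans ?_ hle⟩
    rw [span_range_smul_top]
    exact le_iSup (fun i => a i • (⊤ : Submodule R M)) i
  · intro hSA n a hW _
    obtain ⟨L, ⟨hLtop, _⟩, hle⟩ := hSA n a hW
    intro h
    apply hLtop
    rw [span_range_smul_top] at h
    exact top_le_iff.mp (h ▸ iSup_le hle)
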